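/- arXiv:1105.2359 — 3 statements merged into one kernel-verified Lean document; each statement's English description precedes it below -/
import Mathlib

section
/- The support of the minimizer of a strictly convex function φ(v) = Σ_i d_i v_i(log v_i − 1) (d_i > 0) over a nonempty polyhedron P ⊆ {v ≥ 0} contains the support of every feasible point: if ṽ ∈ P then supp(ṽ) ⊆ supp(v*) where v* is the minimizer of φ over P. -/
/-!
If `v` minimizes `φ(v) = ∑ dᵢ vᵢ (log vᵢ - 1)` over a convex set of nonnegative vectors and
`v j = 0 < w j`, move from `v` towards `w` by a step `t`. Every coordinate but `j` changes `φ` by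
at most the convexity bound, while coordinate `j` contributes the extra term `dⱼ wⱼ t log t`,
whose slope `dⱼ wⱼ log t` tends to `-∞` as `t → 0⁺`. So a small step decreases `φ`.
-/

open Matrix Real Filter Topology

noncomputable def negEntropy {ι : Type*} [Fintype ι] (d v : ι → ℝ) : ℝ :=
  ∑ i, d i * v i * (log (v i) - 1)

lemma convexOn_mul_log_sub_one : ConvexOn ℝ (Set.Ici 0) fun x : ℝ => x * (log x - 1) := by
  refine (convexOn_mul_log.sub (concaveOn_id (convex_Ici 0))).congr fun x _ => ?_
  simp only [Pi.sub_apply, id_eq]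
  ring

lemma mul_log_sub_one_of_mul {t : ℝ} (ht : t ≠ 0) (b : ℝ) :
    t * b * (log (t * b) - 1) = t * (b * (log b - 1)) + t * b * log t := by
  rcases eq_or_ne b 0 with rfl | hb
  · simp
  · rw [log_mul ht hb]
    ring

lemma negEntropy_segment_le {ι : Type*} [Fintype ι] [DecidableEq ι] {d v w : ι → ℝ}
    (hd : ∀ i, 0 ≤ d i) (hv : ∀ i, 0 ≤ v i) (hw : ∀ i, 0 ≤ w i) {j : ι} (hvj : v j = 0)
    {t : ℝ} (ht₀ : 0 < t) (ht₁ : t ≤ 1) :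
    negEntropy d ((1 - t) • v + t • w) ≤
      (1 - t) * negEntropy d v + t * negEntropy d w + d j * w j * t * log t := by
  have hpoint : ∀ i, d i * ((1 - t) * v i + t * w i) * (log ((1 - t) * v i + t * w i) - 1) ≤
      (1 - t) * (d i * v i * (log (v i) - 1)) + t * (d i * w i * (log (w i) - 1)) +
        if i = j then d j * w j * t * log t else 0 := by
    intro i
    rcases eq_or_ne i j with rfl | hij
    · rw [hvj, if_pos rfl, mul_zero, zero_add, mul_assoc (d i), mul_log_sub_one_of_mul ht₀.ne']
      exact le_of_eq (by ring)
    · have hconv := convexOn_mul_log_sub_one.2 (Set.mem_Ici.2 (hv i)) (Set.mem_Ici.2 (hw i))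
        (sub_nonneg.2 ht₁) ht₀.le (sub_add_cancel 1 t)
      simp only [smul_eq_mul] at hconv
      rw [if_neg hij, add_zero]
      linarith [mul_le_mul_of_nonneg_left hconv (hd i)]
  calc negEntropy d ((1 - t) • v + t • w)
      ≤ ∑ i, ((1 - t) * (d i * v i * (log (v i) - 1)) + t * (d i * w i * (log (w i) - 1)) +
          if i = j then d j * w j * t * log t else 0) :=
        Finset.sum_le_sum fun i _ => by simpa using hpoint i
    _ = _ := by
        simp only [Finset.sum_add_distrib, ← Finset.mul_sum, Finset.sum_ite_eq',
          Finset.mem_univ, if_true, negEntropy]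

theorem support_subset_support_of_isMinOn_negEntropy {ι : Type*} [Fintype ι]
    {S : Set (ι → ℝ)} (hS : Convex ℝ S) (hS₀ : ∀ u ∈ S, ∀ i, 0 ≤ u i)
    {d : ι → ℝ} (hd : ∀ i, 0 < d i) {v w : ι → ℝ} (hv : v ∈ S)
    (hmin : IsMinOn (negEntropy d) S v) (hw : w ∈ S) :
    Function.support w ⊆ Function.support v := by
  classical
  intro j hwj
  by_contra hvj
  rw [Function.mem_support] at hwj
  rw [Function.notMem_support] at hvj
  set K := negEntropy d w - negEntropy d v
  have hc : 0 < d j * w j := mul_pos (hd j) ((hS₀ w hw j).lt_of_ne' hwj)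
  obtain ⟨t, ⟨ht₀, ht₁⟩, hlog⟩ : ∃ t ∈ Set.Ioc (0 : ℝ) 1, log t < -K / (d j * w j) :=
    (Filter.Eventually.and (Ioc_mem_nhdsGT one_pos)
      (tendsto_log_nhdsGT_zero.eventually (eventually_lt_atBot _))).exists
  have hseg := negEntropy_segment_le (fun i => (hd i).le) (hS₀ v hv) (hS₀ w hw) hvj ht₀ ht₁
  have hstep := isMinOn_iff.1 hmin _ (hS hv hw (sub_nonneg.2 ht₁) ht₀.le (sub_add_cancel 1 t))
  have hslope : 0 ≤ K + d j * w j * log t :=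
    (mul_nonneg_iff_of_pos_left ht₀).1 (by linarith)
  rw [lt_div_iff₀ hc] at hlog
  linarith

lemma convex_setOf_mulVec_eq_and_nonneg {m n : Type*} [Fintype n] (M : Matrix m n ℝ)
    (q : m → ℝ) : Convex ℝ {v | M *ᵥ v = q ∧ ∀ i, 0 ≤ v i} := by
  rintro x ⟨hMx, hx⟩ y ⟨hMy, hy⟩ a b ha hb hab
  refine ⟨?_, fun i => ?_⟩
  · rw [mulVec_add, mulVec_smul, mulVec_smul, hMx, hMy, ← add_smul, hab, one_smul]
  · simp only [Pi.add_apply, Pi.smul_apply, smul_eq_mul]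
    exact add_nonneg (mul_nonneg ha (hx i)) (mul_nonneg hb (hy i))

theorem stmt8_general {k N : ℕ} (M : Matrix (Fin k) (Fin N) ℝ) (q : Fin k → ℝ)
    (d : Fin N → ℝ) (hd : ∀ i, 0 < d i)
    (P : Set (Fin N → ℝ)) (hP : P = {v | M.mulVec v = q ∧ ∀ i, 0 ≤ v i})
    (vstar : Fin N → ℝ) (hvstar : vstar ∈ P)
    (hmin : ∀ w ∈ P, (∑ i, d i * vstar i * (Real.log (vstar i) - 1))
      ≤ ∑ i, d i * w i * (Real.log (w i) - 1))
    (vt : Fin N → ℝ) (hvt : vt ∈ P) :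
    ∀ i, vt i ≠ 0 → vstar i ≠ 0 := by
  subst hP
  exact fun i hi => support_subset_support_of_isMinOn_negEntropy
    (convex_setOf_mulVec_eq_and_nonneg M q) (fun _ hu => hu.2) hd hvstar (isMinOn_iff.2 hmin) hvt hi

/-- the minimizer `v*` of `φ(v) = Σ d_i v_i (log v_i - 1)`
(`d_i > 0`, `0 log 0 = 0`) over a nonempty bounded polyhedron
`P = {v : Mv = q, v ≥ 0}` has support containing that of every feasible
point. -/
theorem stmt8 {k N : ℕ} (M : Matrix (Fin k) (Fin N) ℝ) (q : Fin k → ℝ)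
    (d : Fin N → ℝ) (hd : ∀ i, 0 < d i)
    (P : Set (Fin N → ℝ)) (hP : P = {v | M.mulVec v = q ∧ ∀ i, 0 ≤ v i})
    (hne : P.Nonempty) (hbd : Bornology.IsBounded P)
    (vstar : Fin N → ℝ) (hvstar : vstar ∈ P)
    (hmin : ∀ w ∈ P, (∑ i, d i * vstar i * (Real.log (vstar i) - 1))
      ≤ ∑ i, d i * w i * (Real.log (w i) - 1))
    (vt : Fin N → ℝ) (hvt : vt ∈ P) :
    ∀ i, vt i ≠ 0 → vstar i ≠ 0 :=
  stmt8_general M q d hd P hP vstar hvstar hmin vt hvt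
end

section
/- For a mass conserving network with a single terminal-linkage class (strongly connected reaction graph), the all-ones vector \mathbf{1} ∈ ℝ^n lies in the range of Y^T; specifically Y^T e = β̂ \mathbf{1} for some scalar β̂, where e is the positive mass vector. -/
/-!
Put `v := eᵀ Y`. Mass conservation says `vᵀ Aₖ = 0`, i.e. each `v a` is the `A`-weighted mean of
the values of `v` at the out-neighbours of `a`. At a maximum point this mean is attained only if
every out-neighbour is again a maximum point (maximum principle), so strong connectivity makes
`Yᵀ e = v` constant.
-/

open Matrix Finset

section Harmonic

variable {ι : Type*} [Fintype ι] {A : Matrix ι ι ℝ} {v : ι → ℝ}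

theorem vecMul_transpose_sub_diagonal_eq_zero_iff [DecidableEq ι] :
    vecMul v (Aᵀ - diagonal (A *ᵥ 1)) = 0 ↔ ∀ a, ∑ i, A a i * (v i - v a) = 0 := by
  simp only [funext_iff, vecMul_sub, vecMul_transpose, vecMul_diagonal, Pi.sub_apply,
    Pi.zero_apply, mulVec, dotProduct, Pi.one_apply, mul_one, mul_sub, sum_sub_distrib,
    ← sum_mul]
  refine forall_congr' fun a => ?_
  rw [mul_comm (v a)]

theorem eq_of_le_of_sum_mul_sub_eq_zero (hA : ∀ i j, 0 ≤ A i j) {a b : ι}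
    (hmax : ∀ i, v i ≤ v a) (hharm : ∑ i, A a i * (v i - v a) = 0) (hab : 0 < A a b) :
    v b = v a := by
  have hnonpos : ∀ i ∈ univ, A a i * (v i - v a) ≤ 0 := fun i _ =>
    mul_nonpos_of_nonneg_of_nonpos (hA a i) (sub_nonpos.mpr (hmax i))
  have hb := (sum_eq_zero_iff_of_nonpos hnonpos).mp hharm b (mem_univ b)
  exact sub_eq_zero.mp ((mul_eq_zero.mp hb).resolve_left hab.ne')

theorem exists_eq_const_of_sum_mul_sub_eq_zero (hA : ∀ i j, 0 ≤ A i j)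
    (hconn : ∀ i j, Relation.ReflTransGen (fun a b => 0 < A a b) i j)
    (hharm : ∀ a, ∑ i, A a i * (v i - v a) = 0) : ∃ c, v = fun _ => c := by
  cases isEmpty_or_nonempty ι
  · exact ⟨0, funext isEmptyElim⟩
  obtain ⟨i₀, hi₀⟩ := Finite.exists_max v
  refine ⟨v i₀, funext fun j => ?_⟩
  induction hconn i₀ j with
  | refl => rfl
  | tail _ hab ih =>
    rw [← ih] at hi₀ ⊢
    exact eq_of_le_of_sum_mul_sub_eq_zero hA hi₀ (hharm _) hab

end Harmonic

theorem stmt14_general {m n : ℕ} (Y : Matrix (Fin m) (Fin n) ℝ)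
    (A : Matrix (Fin n) (Fin n) ℝ) (hA : ∀ i j, 0 ≤ A i j)
    (hconn : ∀ i j : Fin n, Relation.ReflTransGen (fun a b => 0 < A a b) i j)
    (e : Fin m → ℝ)
    (hmass : Matrix.vecMul e (Y * (Aᵀ - Matrix.diagonal (A.mulVec 1))) = 0) :
    ∃ β : ℝ, Yᵀ.mulVec e = fun _ => β := by
  rw [← vecMul_vecMul, vecMul_transpose_sub_diagonal_eq_zero_iff] at hmass
  rw [mulVec_transpose]
  exact exists_eq_const_of_sum_mul_sub_eq_zero hA hconn hmass

/-- for a mass conserving single terminal-linkage (strongly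
connected) network, `Yᵀ e = β̂ 1` for some scalar `β̂`; in particular `1` is
in the range of `Yᵀ`. -/
theorem stmt14 {m n : ℕ} (Y : Matrix (Fin m) (Fin n) ℝ) (hY : ∀ i j, 0 ≤ Y i j)
    (A : Matrix (Fin n) (Fin n) ℝ) (hA : ∀ i j, 0 ≤ A i j)
    (hconn : ∀ i j : Fin n, Relation.ReflTransGen (fun a b => 0 < A a b) i j)
    (e : Fin m → ℝ) (he : ∀ i, 0 < e i)
    (hmass : Matrix.vecMul e (Y * (Aᵀ - Matrix.diagonal (A.mulVec 1))) = 0) :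
    ∃ β : ℝ, Yᵀ.mulVec e = fun _ => β :=
  stmt14_general Y A hA hconn e hmass
end

section
/- Suppose there exist c > 0 in ℝ^m, α > 0 with Y A_k ψ(c) = α b, and suppose \mathbf{1} is in the range of Y^T. Then there exists c̃ > 0 with Y A_k ψ(c̃) = b. Consequently, for a mass conserving single terminal-linkage network, a positive steady state Y A_k ψ(c) = b exists if and only if b is in the range of Y A_k. -/
open Matrix

/-! Since `Yᵀ δ = 1`, rescaling the concentrations to `cᵢ β^{δᵢ}` multiplies every monomial
`ψⱼ(c) = ∏ᵢ cᵢ^{Yᵢⱼ}` by the same factor `β^{∑ᵢ Yᵢⱼ δᵢ} = β`. Taking `β = α⁻¹` turns a steady state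
`Y A_k ψ(c) = α b` into one with right-hand side `b`. -/

theorem Real.prod_rpow_mul_rpow_eq {ι : Type*} [Fintype ι] (y δ c : ι → ℝ) (hc : ∀ i, 0 ≤ c i)
    {β : ℝ} (hβ : 0 < β) :
    ∏ i, (β ^ δ i * c i) ^ y i = β ^ (∑ i, y i * δ i) * ∏ i, c i ^ y i := by
  rw [Real.rpow_sum_of_pos hβ, ← Finset.prod_mul_distrib]
  refine Finset.prod_congr rfl fun i _ => ?_
  rw [Real.mul_rpow (Real.rpow_nonneg hβ.le _) (hc i), ← Real.rpow_mul hβ.le, mul_comm (δ i)]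

theorem exists_pos_mulVec_monomial_eq_of_eq_smul {ι κ : Type*} [Fintype ι] [Fintype κ]
    {Y : Matrix ι κ ℝ} (N : Matrix ι κ ℝ) {ψ : (ι → ℝ) → κ → ℝ}
    (hψ : ∀ c j, ψ c j = ∏ i, c i ^ Y i j) {δ : ι → ℝ} (hδ : ∀ j, ∑ i, Y i j * δ i = 1)
    {b c : ι → ℝ} {α : ℝ} (hc : ∀ i, 0 < c i) (hα : 0 < α) (hss : N *ᵥ ψ c = α • b) :
    ∃ ct : ι → ℝ, (∀ i, 0 < ct i) ∧ N *ᵥ ψ ct = b := by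
  have hβ : 0 < α⁻¹ := inv_pos.mpr hα
  refine ⟨fun i => α⁻¹ ^ δ i * c i, fun i => mul_pos (Real.rpow_pos_of_pos hβ _) (hc i), ?_⟩
  have hscale : ψ (fun i => α⁻¹ ^ δ i * c i) = α⁻¹ • ψ c := by
    funext j
    rw [hψ, Pi.smul_apply, hψ, smul_eq_mul,
      Real.prod_rpow_mul_rpow_eq _ _ _ (fun i => (hc i).le) hβ, hδ, Real.rpow_one]
  rw [hscale, mulVec_smul, hss, smul_smul, inv_mul_cancel₀ hα.ne', one_smul]

theorem stmt16_general {m n : ℕ} (Y : Matrix (Fin m) (Fin n) ℝ)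
    (A : Matrix (Fin n) (Fin n) ℝ)
    (ψ : (Fin m → ℝ) → Fin n → ℝ) (hψ : ∀ c j, ψ c j = ∏ i, c i ^ Y i j)
    (hone : ∃ δ : Fin m → ℝ, ∀ j, ∑ i, Y i j * δ i = 1)
    (b : Fin m → ℝ)
    (hprev : (∃ η, b = (Y * (Aᵀ - Matrix.diagonal (A.mulVec 1))).mulVec η) →
      ∃ c : Fin m → ℝ, ∃ α : ℝ, (∀ i, 0 < c i) ∧ 0 < α ∧
        (Y * (Aᵀ - Matrix.diagonal (A.mulVec 1))).mulVec (ψ c) = α • b) :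
    ((∀ c : Fin m → ℝ, ∀ α : ℝ, (∀ i, 0 < c i) → 0 < α →
        (Y * (Aᵀ - Matrix.diagonal (A.mulVec 1))).mulVec (ψ c) = α • b →
        ∃ ct : Fin m → ℝ, (∀ i, 0 < ct i) ∧
          (Y * (Aᵀ - Matrix.diagonal (A.mulVec 1))).mulVec (ψ ct) = b) ∧
      ((∃ c : Fin m → ℝ, (∀ i, 0 < c i) ∧
          (Y * (Aᵀ - Matrix.diagonal (A.mulVec 1))).mulVec (ψ c) = b)
        ↔ ∃ η, b = (Y * (Aᵀ - Matrix.diagonal (A.mulVec 1))).mulVec η)) := by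
  obtain ⟨δ, hδ⟩ := hone
  have rescale : ∀ (c : Fin m → ℝ) (α : ℝ), (∀ i, 0 < c i) → 0 < α →
      (Y * (Aᵀ - diagonal (A *ᵥ 1))) *ᵥ ψ c = α • b →
      ∃ ct : Fin m → ℝ, (∀ i, 0 < ct i) ∧ (Y * (Aᵀ - diagonal (A *ᵥ 1))) *ᵥ ψ ct = b :=
    fun _ _ hc hα hss => exists_pos_mulVec_monomial_eq_of_eq_smul _ hψ hδ hc hα hss
  refine ⟨rescale, ⟨fun ⟨c, _, hss⟩ => ⟨ψ c, hss.symm⟩, fun hb => ?_⟩⟩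
  obtain ⟨c, α, hc, hα, hss⟩ := hprev hb
  exact rescale c α hc hα hss

/-- if `Y A_k ψ(c) = α b` for some `c > 0`, `α > 0`, and `1` is
in the range of `Yᵀ`, then there is `c̃ > 0` with `Y A_k ψ(c̃) = b`.
Consequently, for a mass conserving single terminal-linkage network (where the
scaled steady state is provided by the earlier results, hypothesis `hprev`),
a positive steady state `Y A_k ψ(c) = b` exists iff `b ∈ range (Y A_k)`. -/
theorem stmt16 {m n : ℕ} (Y : Matrix (Fin m) (Fin n) ℝ) (hY : ∀ i j, 0 ≤ Y i j)
    (A : Matrix (Fin n) (Fin n) ℝ) (hA : ∀ i j, 0 ≤ A i j)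
    (hconn : ∀ i j : Fin n, Relation.ReflTransGen (fun a b => 0 < A a b) i j)
    (e : Fin m → ℝ) (he : ∀ i, 0 < e i)
    (hmass : Matrix.vecMul e (Y * (Aᵀ - Matrix.diagonal (A.mulVec 1))) = 0)
    (ψ : (Fin m → ℝ) → Fin n → ℝ) (hψ : ∀ c j, ψ c j = ∏ i, c i ^ Y i j)
    (hone : ∃ δ : Fin m → ℝ, ∀ j, ∑ i, Y i j * δ i = 1)
    (b : Fin m → ℝ)
    (hprev : (∃ η, b = (Y * (Aᵀ - Matrix.diagonal (A.mulVec 1))).mulVec η) →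
      ∃ c : Fin m → ℝ, ∃ α : ℝ, (∀ i, 0 < c i) ∧ 0 < α ∧
        (Y * (Aᵀ - Matrix.diagonal (A.mulVec 1))).mulVec (ψ c) = α • b) :
    ((∀ c : Fin m → ℝ, ∀ α : ℝ, (∀ i, 0 < c i) → 0 < α →
        (Y * (Aᵀ - Matrix.diagonal (A.mulVec 1))).mulVec (ψ c) = α • b →
        ∃ ct : Fin m → ℝ, (∀ i, 0 < ct i) ∧
          (Y * (Aᵀ - Matrix.diagonal (A.mulVec 1))).mulVec (ψ ct) = b) ∧
      ((∃ c : Fin m → ℝ, (∀ i, 0 < c i) ∧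
          (Y * (Aᵀ - Matrix.diagonal (A.mulVec 1))).mulVec (ψ c) = b)
        ↔ ∃ η, b = (Y * (Aᵀ - Matrix.diagonal (A.mulVec 1))).mulVec η)) :=
  stmt16_general Y A ψ hψ hone b hprev
end
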